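/- arXiv:2506.00921 — 2 statements merged into one kernel-verified Lean document; each statement's English description precedes it below -/
import Mathlib

section
/- For Hermitian matrices A and B of order n and indices i, j ≥ 1 with i + j - 1 ≤ n, the (i+j-1)-th largest eigenvalue of A + B is at most the i-th largest eigenvalue of A plus the j-th largest eigenvalue of B. -/
/-!
Courant–Fischer by dimension counting. Order the eigenvalues decreasingly and index them from 0.
The span of the eigenvectors of `A + B` for its `i + j + 1` largest eigenvalues, the span of the
eigenvectors of `A` for its eigenvalues from the `i`-th on, and the analogous span for `B` have
dimensions adding up to `2n + 1`, so they share a nonzero vector `x`. On these spans the Rayleigh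
quotients are bounded by the respective eigenvalues, which gives
`λ_{i+j}(A + B) ‖x‖² ≤ ⟪(A + B) x, x⟫ = ⟪A x, x⟫ + ⟪B x, x⟫ ≤ (λ_i(A) + λ_j(B)) ‖x‖²`.
-/

/-- The eigenvalues of a Hermitian matrix listed in nonincreasing order. -/
noncomputable def hermEigs {n : ℕ} {A : Matrix (Fin n) (Fin n) ℂ} (hA : A.IsHermitian) :
    List ℝ :=
  ((Finset.univ.val.map hA.eigenvalues).sort (· ≤ ·)).reverse

/-- `hermEig hA k` is `ρ_k(A)`, the `k`-th largest eigenvalue (`k = 1, …, n`). -/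
noncomputable def hermEig {n : ℕ} {A : Matrix (Fin n) (Fin n) ℂ} (hA : A.IsHermitian)
    (k : ℕ) : ℝ :=
  (hermEigs hA).getD (k - 1) 0

open Module Submodule RCLike InnerProductSpace

theorem Submodule.exists_ne_zero_mem_inf_inf {K V : Type*} [DivisionRing K] [AddCommGroup V]
    [Module K V] [FiniteDimensional K V] (U₁ U₂ U₃ : Submodule K V)
    (h : 2 * finrank K V < finrank K U₁ + finrank K U₂ + finrank K U₃) :
    ∃ x ∈ U₁ ⊓ U₂ ⊓ U₃, x ≠ 0 := by
  have finrank_inf_ge (P Q : Submodule K V) :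
      finrank K P + finrank K Q ≤ finrank K ↥(P ⊓ Q) + finrank K V := by
    have := finrank_sup_add_finrank_inf_eq P Q
    have := (P ⊔ Q).finrank_le
    omega
  have h₁₂ := finrank_inf_ge U₁ U₂
  have h₁₂₃ := finrank_inf_ge (U₁ ⊓ U₂) U₃
  refine (Submodule.ne_bot_iff _).1 fun hbot => ?_
  rw [hbot, finrank_bot] at h₁₂₃
  omega

namespace OrthonormalBasis

variable {ι 𝕜 E : Type*} [Fintype ι] [RCLike 𝕜] [NormedAddCommGroup E] [InnerProductSpace 𝕜 E]
  (b : OrthonormalBasis ι 𝕜 E)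

theorem repr_eq_zero_of_mem_span {s : Set ι} {x : E} (hx : x ∈ span 𝕜 (b '' s)) {p : ι}
    (hp : p ∉ s) : b.repr x p = 0 := by
  rw [← b.coe_toBasis, b.toBasis.mem_span_image] at hx
  simpa using fun h => hp (hx (Finsupp.mem_support_iff.2 h))

theorem finrank_span_image (s : Finset ι) : finrank 𝕜 (span 𝕜 (b '' s)) = s.card := by
  rw [Set.image_eq_range]
  exact (finrank_span_eq_card
    (b.orthonormal.linearIndependent.comp _ Subtype.val_injective)).trans (Fintype.card_coe s)

theorem norm_sq_eq_sum_norm_sq_repr (x : E) : ‖x‖ ^ 2 = ∑ p, ‖b.repr x p‖ ^ 2 := by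
  rw [← b.repr.norm_map, EuclideanSpace.norm_sq_eq]

end OrthonormalBasis

namespace LinearMap.IsSymmetric

variable {𝕜 E : Type*} [RCLike 𝕜] [NormedAddCommGroup E] [InnerProductSpace 𝕜 E]
  [FiniteDimensional 𝕜 E] {T : E →ₗ[𝕜] E} (hT : T.IsSymmetric) {n : ℕ} (hn : finrank 𝕜 E = n)

theorem re_inner_apply_self_eq_sum (x : E) :
    re ⟪T x, x⟫_𝕜 = ∑ p, hT.eigenvalues hn p * ‖(hT.eigenvectorBasis hn).repr x p‖ ^ 2 := by
  rw [← (hT.eigenvectorBasis hn).repr.inner_map_map, PiLp.inner_apply, map_sum]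
  refine Finset.sum_congr rfl fun p _ => ?_
  rw [hT.eigenvectorBasis_apply_self_apply, ← smul_eq_mul, inner_smul_left, conj_ofReal,
    inner_self_eq_norm_sq_to_K, ← ofReal_pow, ← ofReal_mul, ofReal_re]

variable {hn} in
theorem re_inner_apply_self_le_of_mem_span {s : Set (Fin n)} {c : ℝ}
    (hc : ∀ p ∈ s, hT.eigenvalues hn p ≤ c) {x : E}
    (hx : x ∈ span 𝕜 (hT.eigenvectorBasis hn '' s)) :
    re ⟪T x, x⟫_𝕜 ≤ c * ‖x‖ ^ 2 := by
  rw [hT.re_inner_apply_self_eq_sum hn, (hT.eigenvectorBasis hn).norm_sq_eq_sum_norm_sq_repr,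
    Finset.mul_sum]
  refine Finset.sum_le_sum fun p _ => ?_
  by_cases hp : p ∈ s
  · exact mul_le_mul_of_nonneg_right (hc p hp) (sq_nonneg _)
  · simp [(hT.eigenvectorBasis hn).repr_eq_zero_of_mem_span hx hp]

variable {hn} in
theorem le_re_inner_apply_self_of_mem_span {s : Set (Fin n)} {c : ℝ}
    (hc : ∀ p ∈ s, c ≤ hT.eigenvalues hn p) {x : E}
    (hx : x ∈ span 𝕜 (hT.eigenvectorBasis hn '' s)) :
    c * ‖x‖ ^ 2 ≤ re ⟪T x, x⟫_𝕜 := by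
  rw [hT.re_inner_apply_self_eq_sum hn, (hT.eigenvectorBasis hn).norm_sq_eq_sum_norm_sq_repr,
    Finset.mul_sum]
  refine Finset.sum_le_sum fun p _ => ?_
  by_cases hp : p ∈ s
  · exact mul_le_mul_of_nonneg_right (hc p hp) (sq_nonneg _)
  · simp [(hT.eigenvectorBasis hn).repr_eq_zero_of_mem_span hx hp]

theorem eigenvalues_add_le {S : E →ₗ[𝕜] E} (hS : S.IsSymmetric) (i j : ℕ) (hij : i + j < n) :
    (hT.add hS).eigenvalues hn ⟨i + j, hij⟩
      ≤ hT.eigenvalues hn ⟨i, by omega⟩ + hS.eigenvalues hn ⟨j, by omega⟩ := by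
  set k : Fin n := ⟨i + j, hij⟩
  set i' : Fin n := ⟨i, by omega⟩
  set j' : Fin n := ⟨j, by omega⟩
  obtain ⟨x, ⟨⟨hxTS, hxT⟩, hxS⟩, hx⟩ := exists_ne_zero_mem_inf_inf
    (span 𝕜 ((hT.add hS).eigenvectorBasis hn '' Finset.Iic k))
    (span 𝕜 (hT.eigenvectorBasis hn '' Finset.Ici i'))
    (span 𝕜 (hS.eigenvectorBasis hn '' Finset.Ici j')) (by
      simp only [OrthonormalBasis.finrank_span_image, Fin.card_Iic, Fin.card_Ici, hn, k, i', j']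
      omega)
  refine le_of_mul_le_mul_right ?_ (by positivity : 0 < ‖x‖ ^ 2)
  calc (hT.add hS).eigenvalues hn k * ‖x‖ ^ 2
      ≤ re ⟪(T + S) x, x⟫_𝕜 :=
        (hT.add hS).le_re_inner_apply_self_of_mem_span
          (fun p hp => (hT.add hS).eigenvalues_antitone hn (Finset.mem_Iic.1 hp)) hxTS
    _ = re ⟪T x, x⟫_𝕜 + re ⟪S x, x⟫_𝕜 := by rw [add_apply, inner_add_left, map_add]
    _ ≤ hT.eigenvalues hn i' * ‖x‖ ^ 2 + hS.eigenvalues hn j' * ‖x‖ ^ 2 := by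
        gcongr
        · exact hT.re_inner_apply_self_le_of_mem_span
            (fun p hp => hT.eigenvalues_antitone hn (Finset.mem_Ici.1 hp)) hxT
        · exact hS.re_inner_apply_self_le_of_mem_span
            (fun p hp => hS.eigenvalues_antitone hn (Finset.mem_Ici.1 hp)) hxS
    _ = (hT.eigenvalues hn i' + hS.eigenvalues hn j') * ‖x‖ ^ 2 := (add_mul _ _ _).symm

end LinearMap.IsSymmetric

theorem hermEigs_eq_ofFn_eigenvalues₀ {n : ℕ} {A : Matrix (Fin n) (Fin n) ℂ}
    (hA : A.IsHermitian) : hermEigs hA = List.ofFn hA.eigenvalues₀ := by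
  refine List.Perm.eq_of_sortedGE ?_ hA.eigenvalues₀_antitone.sortedGE_ofFn ?_
  · rw [hermEigs, List.sortedGE_reverse, List.sortedLE_iff_pairwise]
    exact Multiset.pairwise_sort _ _
  · rw [hermEigs, ← Multiset.coe_eq_coe, Multiset.coe_reverse, Multiset.sort_eq,
      ← Fin.univ_val_map]
    change Multiset.map (hA.eigenvalues₀ ∘ _) _ = _
    rw [← Multiset.map_map, Multiset.map_univ_val_equiv]

theorem hermEig_add_one {n : ℕ} {A : Matrix (Fin n) (Fin n) ℂ}
    (hA : A.IsHermitian) {k : ℕ} (hk : k < Fintype.card (Fin n)) :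
    hermEig hA (k + 1) = hA.eigenvalues₀ ⟨k, hk⟩ := by
  rw [hermEig, Nat.add_sub_cancel, hermEigs_eq_ofFn_eigenvalues₀,
    List.getD_eq_getElem _ _ (by simpa using hk), List.getElem_ofFn]

theorem Matrix.IsHermitian.eigenvalues₀_add_le {𝕜 ι : Type*} [RCLike 𝕜] [Fintype ι]
    [DecidableEq ι] {A B : Matrix ι ι 𝕜} (hA : A.IsHermitian) (hB : B.IsHermitian) (i j : ℕ)
    (hij : i + j < Fintype.card ι) :
    (hA.add hB).eigenvalues₀ ⟨i + j, hij⟩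
      ≤ hA.eigenvalues₀ ⟨i, by omega⟩ + hB.eigenvalues₀ ⟨j, by omega⟩ := by
  unfold Matrix.IsHermitian.eigenvalues₀
  convert (isSymmetric_toEuclideanLin_iff.mpr hA).eigenvalues_add_le finrank_euclideanSpace
    (isSymmetric_toEuclideanLin_iff.mpr hB) i j hij using 3
  exact map_add _ A B

/-- Weyl's inequality: for Hermitian `A, B` of order `n` and `i + j - 1 ≤ n`,
`ρ_{i+j-1}(A + B) ≤ ρ_i(A) + ρ_j(B)`. -/
theorem weyl_inequality {n : ℕ} {A B : Matrix (Fin n) (Fin n) ℂ}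
    (hA : A.IsHermitian) (hB : B.IsHermitian) (i j : ℕ) (hi : 1 ≤ i) (hj : 1 ≤ j)
    (hij : i + j - 1 ≤ n) :
    hermEig (hA.add hB) (i + j - 1) ≤ hermEig hA i + hermEig hB j := by
  obtain ⟨i, rfl⟩ := Nat.exists_eq_add_of_le' hi
  obtain ⟨j, rfl⟩ := Nat.exists_eq_add_of_le' hj
  have hlt : i + j < Fintype.card (Fin n) := by rw [Fintype.card_fin]; omega
  rw [show i + 1 + (j + 1) - 1 = i + j + 1 by omega, hermEig_add_one _ hlt, hermEig_add_one hA,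
    hermEig_add_one hB]
  exact hA.eigenvalues₀_add_le hB i j hlt
end

section
/- Let G be a graph with p pendant vertices and q quasi-pendant vertices. Then the multiplicity of 1 as a Laplacian eigenvalue of G is at least p - q. -/
open scoped Classical in
/-- The multiset of Laplacian eigenvalues (roots of the characteristic polynomial of `L = D - A`). -/
noncomputable def lapSpectrum {V : Type*} [Fintype V] (G : SimpleGraph V) : Multiset ℝ :=
  (G.lapMatrix ℝ).charpoly.roots

/-- The Laplacian eigenvalues listed in nonincreasing order. -/
noncomputable def lapEigs {V : Type*} [Fintype V] (G : SimpleGraph V) : List ℝ :=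
  ((lapSpectrum G).sort (· ≤ ·)).reverse

/-- `lapEig G k` is `μ_k(G)`, the `k`-th largest Laplacian eigenvalue (`k = 1, …, n`). -/
noncomputable def lapEig {V : Type*} [Fintype V] (G : SimpleGraph V) (k : ℕ) : ℝ :=
  (lapEigs G).getD (k - 1) 0

open scoped Classical in
/-- The number of Laplacian eigenvalues (with multiplicity) satisfying predicate `p`. -/
noncomputable def lapCount {V : Type*} [Fintype V] (G : SimpleGraph V) (p : ℝ → Prop) : ℕ :=
  ((lapSpectrum G).filter p).card


/-!
A vector `x` supported on the pendant vertices is fixed by the degree matrix. If moreover, at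
every quasi-pendant vertex, the entries of `x` on its pendant neighbours sum to zero, then `x` is
killed by the adjacency matrix (a vertex that is not quasi-pendant has no pendant neighbour at
all), so `x` is a `1`-eigenvector of `L = D - A`. These are `q` linear conditions on a space of
dimension `p`, and the geometric multiplicity of an eigenvalue is at most its algebraic one.
-/

open Module Polynomial Matrix

theorem Matrix.finrank_eigenspace_toLin'_le_count_roots_charpoly {K n : Type*} [Field K]
    [DecidableEq K] [Fintype n] [DecidableEq n] (A : Matrix n n K) (μ : K) :
    finrank K (End.eigenspace A.toLin' μ) ≤ A.charpoly.roots.count μ := by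
  rw [count_roots, ← charpoly_toLin']
  exact LinearMap.finrank_eigenspace_le _ μ

theorem LinearMap.finrank_le_finrank_ker_add_finrank {K V W : Type*} [DivisionRing K]
    [AddCommGroup V] [Module K V] [AddCommGroup W] [Module K W] [FiniteDimensional K V]
    [FiniteDimensional K W] (f : V →ₗ[K] W) :
    finrank K V ≤ finrank K (ker f) + finrank K W := by
  rw [← f.finrank_range_add_finrank_ker, add_comm]
  exact Nat.add_le_add_left (Submodule.finrank_le _) _

theorem Submodule.finrank_le_of_injective_of_mapsTo {K V W : Type*} [DivisionRing K]
    [AddCommGroup V] [Module K V] [AddCommGroup W] [Module K W] [FiniteDimensional K W]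
    {f : V →ₗ[K] W} (hf : Function.Injective f) {S : Submodule K V} {T : Submodule K W}
    (h : ∀ x ∈ S, f x ∈ T) : finrank K S ≤ finrank K T :=
  LinearMap.finrank_le_finrank_of_injective (f := f.restrict h)
    ((LinearMap.injective_restrict_iff h).2 (by simp [LinearMap.ker_eq_bot.2 hf]))

namespace SimpleGraph

variable {V K : Type*} [Fintype V] [Field K] (G : SimpleGraph V) [DecidableRel G.Adj]

noncomputable def pendantExtendByZero : ({v // G.degree v = 1} → K) →ₗ[K] V → K :=
  Function.ExtendByZero.linearMap K Subtype.val

noncomputable def pendantNeighborSum :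
    ({v // G.degree v = 1} → K) →ₗ[K] {v // ∃ u, G.Adj v u ∧ G.degree u = 1} → K :=
  LinearMap.funLeft K K Subtype.val ∘ₗ (G.adjMatrix K).mulVecLin ∘ₗ G.pendantExtendByZero

variable {G}

theorem pendantExtendByZero_apply_of_degree_ne_one {v : V} (hv : G.degree v ≠ 1)
    (x : {v // G.degree v = 1} → K) : G.pendantExtendByZero x v = 0 :=
  Function.extend_apply' _ _ _ fun ⟨p, hp⟩ => hv (hp ▸ p.2)

theorem pendantExtendByZero_injective :
    Function.Injective (G.pendantExtendByZero (K := K)) :=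
  Function.extend_injective Subtype.val_injective (0 : V → K)

theorem adjMatrix_mulVec_pendantExtendByZero {x : {v // G.degree v = 1} → K}
    (hx : x ∈ LinearMap.ker G.pendantNeighborSum) :
    G.adjMatrix K *ᵥ G.pendantExtendByZero x = 0 := by
  funext v
  by_cases hv : ∃ u, G.Adj v u ∧ G.degree u = 1
  · exact congrFun hx ⟨v, hv⟩
  · push Not at hv
    rw [adjMatrix_mulVec_apply, Pi.zero_apply]
    refine Finset.sum_eq_zero fun u hu => pendantExtendByZero_apply_of_degree_ne_one ?_ x
    exact hv u ((mem_neighborFinset _ _ _).1 hu)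

theorem degMatrix_mulVec_pendantExtendByZero [DecidableEq V] (x : {v // G.degree v = 1} → K) :
    G.degMatrix K *ᵥ G.pendantExtendByZero x = G.pendantExtendByZero x := by
  funext v
  rw [degMatrix_mulVec_apply]
  by_cases hv : G.degree v = 1
  · rw [hv, Nat.cast_one, one_mul]
  · rw [pendantExtendByZero_apply_of_degree_ne_one hv, mul_zero]

theorem pendantExtendByZero_mem_eigenspace_one [DecidableEq V] {x : {v // G.degree v = 1} → K}
    (hx : x ∈ LinearMap.ker G.pendantNeighborSum) :
    G.pendantExtendByZero x ∈ End.eigenspace (G.lapMatrix K).toLin' 1 := by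
  rw [End.mem_eigenspace_iff, toLin'_apply, one_smul, lapMatrix, sub_mulVec,
    degMatrix_mulVec_pendantExtendByZero, adjMatrix_mulVec_pendantExtendByZero hx, sub_zero]

theorem card_pendant_le_count_one_roots_charpoly_lapMatrix [DecidableEq V] [DecidableEq K] :
    Fintype.card {v // G.degree v = 1} ≤
      (G.lapMatrix K).charpoly.roots.count 1 +
        Fintype.card {v // ∃ u, G.Adj v u ∧ G.degree u = 1} :=
  calc Fintype.card {v // G.degree v = 1}
      ≤ finrank K (LinearMap.ker G.pendantNeighborSum) +
          Fintype.card {v // ∃ u, G.Adj v u ∧ G.degree u = 1} := by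
        simpa using (G.pendantNeighborSum (K := K)).finrank_le_finrank_ker_add_finrank
    _ ≤ _ := by
        gcongr
        exact (Submodule.finrank_le_of_injective_of_mapsTo pendantExtendByZero_injective
          fun _ => pendantExtendByZero_mem_eigenspace_one).trans
          (Matrix.finrank_eigenspace_toLin'_le_count_roots_charpoly _ _)

end SimpleGraph

theorem lapSpectrum_eq_roots_charpoly {V : Type*} [Fintype V] [DecidableEq V] (G : SimpleGraph V)
    [DecidableRel G.Adj] : lapSpectrum G = (G.lapMatrix ℝ).charpoly.roots := by
  unfold lapSpectrum
  congr!

open scoped Classical in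
/-- A graph with `p` pendant vertices and `q` quasi-pendant vertices has `1` as a Laplacian
eigenvalue with multiplicity at least `p - q`. -/
theorem count_one_lapSpectrum {V : Type*} [Fintype V] (G : SimpleGraph V)
    [DecidableRel G.Adj] :
    ((Finset.univ.filter fun v => G.degree v = 1).card : ℤ) -
        (Finset.univ.filter fun v => ∃ u, G.Adj v u ∧ G.degree u = 1).card ≤
      ((lapSpectrum G).count 1 : ℤ) := by
  rw [lapSpectrum_eq_roots_charpoly, ← Fintype.card_subtype, ← Fintype.card_subtype,
    sub_le_iff_le_add]
  exact_mod_cast G.card_pendant_le_count_one_roots_charpoly_lapMatrix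
end
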